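/- Let A = σ_z ⊗ I₂ / 2 and B = σ_x ⊗ I₂ / 2 (4×4 matrices), and D₁ = (1/√2)diag(1,−1,0,0), D₂ = (1/√2)diag(0,0,1,−1). Then Tr(D_α D_β) = Tr(A_α A_β) for all α, β ∈ {1,2} (with A₁ = A, A₂ = B), and Tr(D_α D_β D_γ) = Tr(A_α A_β A_γ) = 0 for all α, β, γ ∈ {1,2}, while AB ≠ BA. -/

import Mathlib

open Matrix Kronecker

noncomputable def pauliX : Matrix (Fin 2) (Fin 2) ℂ := !![0, 1; 1, 0]
noncomputable def pauliZ : Matrix (Fin 2) (Fin 2) ℂ := !![1, 0; 0, -1]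

/-- `A = σ_z ⊗ I₂ / 2`, on the index set `Fin 2 × Fin 2` ordered lexicographically
(so that `(i,j)` corresponds to the basis vector `2i + j` of `ℂ⁴`). -/
noncomputable def matA : Matrix (Fin 2 × Fin 2) (Fin 2 × Fin 2) ℂ :=
  (1 / 2 : ℂ) • (pauliZ ⊗ₖ (1 : Matrix (Fin 2) (Fin 2) ℂ))

/-- `B = σ_x ⊗ I₂ / 2`. -/
noncomputable def matB : Matrix (Fin 2 × Fin 2) (Fin 2 × Fin 2) ℂ :=
  (1 / 2 : ℂ) • (pauliX ⊗ₖ (1 : Matrix (Fin 2) (Fin 2) ℂ))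

/-- `D₁ = diag(1,−1,0,0)/√2` under the identification `(i,j) ↦ 2i+j`. -/
noncomputable def matD1 : Matrix (Fin 2 × Fin 2) (Fin 2 × Fin 2) ℂ :=
  ((Real.sqrt 2 : ℂ))⁻¹ •
    Matrix.diagonal (fun p : Fin 2 × Fin 2 =>
      if p.1 = 0 then (if p.2 = 0 then (1 : ℂ) else -1) else 0)

/-- `D₂ = diag(0,0,1,−1)/√2`. -/
noncomputable def matD2 : Matrix (Fin 2 × Fin 2) (Fin 2 × Fin 2) ℂ :=
  ((Real.sqrt 2 : ℂ))⁻¹ •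
    Matrix.diagonal (fun p : Fin 2 × Fin 2 =>
      if p.1 = 1 then (if p.2 = 0 then (1 : ℂ) else -1) else 0)

noncomputable def Dv : Fin 2 → Matrix (Fin 2 × Fin 2) (Fin 2 × Fin 2) ℂ := ![matD1, matD2]
noncomputable def Av : Fin 2 → Matrix (Fin 2 × Fin 2) (Fin 2 × Fin 2) ℂ := ![matA, matB]

/-!
Both pairs are scalar multiples of Kronecker products, `A_α = ½ σ_α ⊗ I₂` with
`(σ₁, σ₂) = (σ_z, σ_x)` and `D_α = 2^{-1/2} E_αα ⊗ σ_z`, and the trace is multiplicative on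
Kronecker products. Hence `Tr(A_α A_β) = ¼ · Tr(σ_α σ_β) · 2` and
`Tr(D_α D_β) = ½ · Tr(E_αα E_ββ) · Tr(σ_z²)` both equal `δ_αβ`, while the cubic traces vanish
because every product of three matrices from `{σ_z, σ_x}` is traceless, as is `σ_z³ = σ_z`.
Finally `σ_z σ_x ≠ σ_x σ_z`, and `X ↦ X ⊗ I₂` is injective.
-/

section KroneckerTrace

variable {R m n : Type*} [CommSemiring R] [Fintype m] [Fintype n]

theorem trace_smul_kronecker_mul_smul_kronecker (c : R) (X₁ X₂ : Matrix m m R)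
    (Y₁ Y₂ : Matrix n n R) :
    trace (c • (X₁ ⊗ₖ Y₁) * c • (X₂ ⊗ₖ Y₂)) = c ^ 2 * (trace (X₁ * X₂) * trace (Y₁ * Y₂)) := by
  rw [smul_mul_smul_comm, ← mul_kronecker_mul, trace_smul, trace_kronecker, sq, smul_eq_mul]

theorem trace_smul_kronecker_mul_smul_kronecker_mul_smul_kronecker (c : R)
    (X₁ X₂ X₃ : Matrix m m R) (Y₁ Y₂ Y₃ : Matrix n n R) :
    trace (c • (X₁ ⊗ₖ Y₁) * c • (X₂ ⊗ₖ Y₂) * c • (X₃ ⊗ₖ Y₃)) =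
      c ^ 3 * (trace (X₁ * X₂ * X₃) * trace (Y₁ * Y₂ * Y₃)) := by
  rw [smul_mul_smul_comm, smul_mul_smul_comm, ← mul_kronecker_mul, ← mul_kronecker_mul,
    trace_smul, trace_kronecker, pow_succ, sq, smul_eq_mul]

end KroneckerTrace

theorem kronecker_one_injective {R m n : Type*} [Semiring R] [DecidableEq n] [Nonempty n] :
    Function.Injective (fun X : Matrix m m R => X ⊗ₖ (1 : Matrix n n R)) := by
  intro X Y h
  obtain ⟨k⟩ := ‹Nonempty n›
  ext i j
  simpa using congrFun (congrFun h (i, k)) (j, k)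

theorem trace_single_mul_single {R n : Type*} [CommSemiring R] [Fintype n] [DecidableEq n]
    (i j : n) (a b : R) :
    trace (single i i a * single j j b) = if i = j then a * b else 0 := by
  split_ifs with h
  · subst h
    rw [single_mul_single_same, trace_single_eq_same]
  · rw [single_mul_single_of_ne (h := h), trace_zero]

theorem pauliZ_eq_diagonal : pauliZ = diagonal ![1, -1] := by
  ext i j
  fin_cases i <;> fin_cases j <;> simp [pauliZ]

theorem pauliZ_mul_pauliZ : pauliZ * pauliZ = 1 := by
  simp [pauliZ, one_fin_two]

theorem trace_pauliZ : trace pauliZ = 0 := by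
  simp [pauliZ, trace_fin_two]

theorem pauliZ_mul_pauliX_ne : pauliZ * pauliX ≠ pauliX * pauliZ := by
  intro h
  have := congrFun (congrFun h 0) 1
  norm_num [pauliZ, pauliX, mul_fin_two] at this

noncomputable def pauli : Fin 2 → Matrix (Fin 2) (Fin 2) ℂ := ![pauliZ, pauliX]

theorem trace_pauli_mul_pauli (α β : Fin 2) :
    trace (pauli α * pauli β) = if α = β then 2 else 0 := by
  fin_cases α <;> fin_cases β <;> simp [pauli, pauliZ, pauliX, trace_fin_two] <;> norm_num

theorem trace_pauli_mul_pauli_mul_pauli (α β γ : Fin 2) :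
    trace (pauli α * pauli β * pauli γ) = 0 := by
  fin_cases α <;> fin_cases β <;> fin_cases γ <;> simp [pauli, pauliZ, pauliX, trace_fin_two]

theorem diagonal_eq_single_kronecker_pauliZ (α : Fin 2) :
    diagonal (fun p : Fin 2 × Fin 2 => if p.1 = α then (if p.2 = 0 then (1 : ℂ) else -1) else 0) =
      single α α 1 ⊗ₖ pauliZ := by
  rw [pauliZ_eq_diagonal, ← diagonal_single, diagonal_kronecker_diagonal]
  congr 1
  funext ⟨i, j⟩
  by_cases h : i = α
  · subst h
    fin_cases j <;> simp
  · simp [h]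

theorem Dv_eq (α : Fin 2) : Dv α = (Real.sqrt 2 : ℂ)⁻¹ • (single α α 1 ⊗ₖ pauliZ) := by
  fin_cases α <;>
    exact congrArg ((Real.sqrt 2 : ℂ)⁻¹ • ·) (diagonal_eq_single_kronecker_pauliZ _)

theorem Av_eq (α : Fin 2) : Av α = (1 / 2 : ℂ) • (pauli α ⊗ₖ (1 : Matrix (Fin 2) (Fin 2) ℂ)) := by
  fin_cases α <;> rfl

theorem trace_Dv_mul_Dv (α β : Fin 2) : trace (Dv α * Dv β) = if α = β then 1 else 0 := by
  have hsqrt : (Real.sqrt 2 : ℂ)⁻¹ ^ 2 = 1 / 2 := by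
    rw [inv_pow, ← Complex.ofReal_pow, Real.sq_sqrt zero_le_two]
    norm_num
  rw [Dv_eq, Dv_eq, trace_smul_kronecker_mul_smul_kronecker, trace_single_mul_single,
    pauliZ_mul_pauliZ, trace_one, hsqrt]
  split_ifs <;> norm_num

theorem trace_Av_mul_Av (α β : Fin 2) : trace (Av α * Av β) = if α = β then 1 else 0 := by
  rw [Av_eq, Av_eq, trace_smul_kronecker_mul_smul_kronecker, trace_pauli_mul_pauli, mul_one,
    trace_one]
  split_ifs <;> norm_num

theorem trace_Dv_mul_Dv_mul_Dv (α β γ : Fin 2) : trace (Dv α * Dv β * Dv γ) = 0 := by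
  rw [Dv_eq, Dv_eq, Dv_eq, trace_smul_kronecker_mul_smul_kronecker_mul_smul_kronecker,
    pauliZ_mul_pauliZ, one_mul, trace_pauliZ, mul_zero, mul_zero]

theorem trace_Av_mul_Av_mul_Av (α β γ : Fin 2) : trace (Av α * Av β * Av γ) = 0 := by
  rw [Av_eq, Av_eq, Av_eq, trace_smul_kronecker_mul_smul_kronecker_mul_smul_kronecker,
    trace_pauli_mul_pauli_mul_pauli, zero_mul, mul_zero]

theorem matA_mul_matB_ne : matA * matB ≠ matB * matA := by
  intro h
  rw [matA, matB, smul_mul_smul_comm, smul_mul_smul_comm, ← mul_kronecker_mul,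
    ← mul_kronecker_mul, one_mul] at h
  exact pauliZ_mul_pauliX_ne (kronecker_one_injective (smul_right_injective _ (by norm_num) h))

theorem stmt19 :
    (∀ α β : Fin 2, trace (Dv α * Dv β) = trace (Av α * Av β)) ∧
    (∀ α β γ : Fin 2,
      trace (Dv α * Dv β * Dv γ) = 0 ∧ trace (Av α * Av β * Av γ) = 0) ∧
    matA * matB ≠ matB * matA :=
  ⟨fun α β => by rw [trace_Dv_mul_Dv, trace_Av_mul_Av],
    fun α β γ => ⟨trace_Dv_mul_Dv_mul_Dv α β γ, trace_Av_mul_Av_mul_Av α β γ⟩,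
    matA_mul_matB_ne⟩
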